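/- Let R be a one-dimensional Gorenstein local ring and I an ideal containing a regular element. Then End_R(I) = End_R(I^{-1}), where both are viewed as subrings of Q(R) and I^{-1} = {α ∈ Q(R) : αI ⊆ R}. -/

import Mathlib

open CategoryTheory TensorProduct IsLocalRing

noncomputable section

/-- The minimal number of generators of an `R`-module `M`. -/
def minGen (R M : Type) [CommRing R] [AddCommGroup M] [Module R M] : ℕ :=
  sInf {n | ∃ s : Finset M, s.card = n ∧ Submodule.span R (s : Set M) = ⊤}

/-- `M` has (generic) rank `r`: at every associated prime of `R`, the localization
of `M` is free of rank `r`. -/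
def HasRank (R M : Type) [CommRing R] [AddCommGroup M] [Module R M] (r : ℕ) : Prop :=
  ∀ (p : Ideal R) (hp : p ∈ associatedPrimes R R),
    letI : p.IsPrime := hp.1
    Module.Free (Localization p.primeCompl) (LocalizedModule p.primeCompl M) ∧
      Module.finrank (Localization p.primeCompl) (LocalizedModule p.primeCompl M) = r

/-- The length of a module, as the Krull dimension of its submodule lattice. -/
def mlength (R M : Type) [CommRing R] [AddCommGroup M] [Module R M] : WithBot ℕ∞ :=
  Order.krullDim (Submodule R M)

/-- The Hilbert–Samuel multiplicity of a one-dimensional local ring `R` is `e`: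
the difference `λ(R/m^{n+1}) - λ(R/m^n)` is eventually the constant `e`. -/
def IsMultiplicity (R : Type) [CommRing R] [IsLocalRing R] (e : ℕ) : Prop :=
  ∃ N : ℕ, ∀ n ≥ N,
    mlength R (R ⧸ (maximalIdeal R ^ (n + 1))) =
      mlength R (R ⧸ (maximalIdeal R ^ n)) + ((e : ℕ∞) : WithBot ℕ∞)

/-- `Ext^n_R(M, N)`. -/
abbrev extKGroup (R M N : Type) [CommRing R] [AddCommGroup M] [Module R M]
    [AddCommGroup N] [Module R N] (n : ℕ) : ModuleCat R :=
  ((Ext R (ModuleCat R) n).obj (Opposite.op (ModuleCat.of R M))).obj (ModuleCat.of R N)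

/-- The canonical evaluation map `M ⊗_R M^* → R`. -/
def evalMap (R M : Type) [CommRing R] [AddCommGroup M] [Module R M] :
    M ⊗[R] (M →ₗ[R] R) →ₗ[R] R :=
  TensorProduct.lift LinearMap.applyₗ

/-- The trace ideal of `M`: the image of the evaluation map `M ⊗_R M^* → R`. -/
def traceIdeal (R M : Type) [CommRing R] [AddCommGroup M] [Module R M] : Ideal R :=
  LinearMap.range (evalMap R M)

/-- A (Noetherian) local ring is Gorenstein of dimension one: it has Krull dimension one
and there is a regular element `x` in the maximal ideal (= the nonunits) such that
`R/(x)` is self-injective. -/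
def IsGorensteinLocalOfDimOne (R : Type) [CommRing R] : Prop :=
  IsNoetherianRing R ∧ IsLocalRing R ∧ ringKrullDim R = 1 ∧
    ∃ x ∈ nonunits R, x ∈ nonZeroDivisors R ∧
      Module.Injective (R ⧸ Ideal.span {x}) (R ⧸ Ideal.span {x})

/-- A (Noetherian) local ring of dimension at most one is Gorenstein. -/
def IsGorensteinLocalOfDimLEOne (A : Type) [CommRing A] : Prop :=
  IsNoetherianRing A ∧ IsLocalRing A ∧
    (Module.Injective A A ∨
      (ringKrullDim A = 1 ∧ ∃ x ∈ nonunits A, x ∈ nonZeroDivisors A ∧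
        Module.Injective (A ⧸ Ideal.span {x}) (A ⧸ Ideal.span {x})))

/-- The multiplier set `{α ∈ Q | αA ⊆ A}` of a subset `A` of a ring `Q`. -/
def multEnd {Q : Type} [CommRing Q] (A : Set Q) : Set Q :=
  {α | ∀ a ∈ A, α * a ∈ A}

/-- The image of an ideal `I` in the total quotient ring. -/
def idealImage (R : Type) [CommRing R] (I : Ideal R) : Set (FractionRing R) :=
  algebraMap R (FractionRing R) '' (I : Set R)

/-- `End_R(I) = {α ∈ Q(R) | α I ⊆ I}` as a submodule of the total quotient ring. -/
def endSubmodule (R : Type) [CommRing R] (I : Ideal R) : Submodule R (FractionRing R) where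
  carrier := multEnd (idealImage R I)
  add_mem' := by
    intro a b ha hb x hx
    rw [add_mul]
    obtain ⟨ya, hya, ea⟩ := ha x hx
    obtain ⟨yb, hyb, eb⟩ := hb x hx
    exact ⟨ya + yb, add_mem hya hyb, by rw [map_add, ea, eb]⟩
  zero_mem' := by
    intro x hx
    exact ⟨0, zero_mem _, by rw [map_zero, zero_mul]⟩
  smul_mem' := by
    intro c a ha x hx
    obtain ⟨y, hy, ey⟩ := ha x hx
    refine ⟨c • y, Submodule.smul_mem _ _ hy, ?_⟩
    rw [Algebra.smul_def, Algebra.smul_def, map_mul, ey, mul_assoc, Algebra.algebraMap_self, RingHom.id_apply]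

/-!
The inclusion `End(I) ⊆ End(I⁻¹)` is formal. Conversely, if `α I⁻¹ ⊆ I⁻¹` then `α ∈ I⁻¹` because
`1 ∈ I⁻¹`, so `r = α i` lies in `R` for `i ∈ I`, and `r I⁻¹ ⊆ R`. It remains to see that `I` is
reflexive: `r I⁻¹ ⊆ R` forces `r ∈ I`.

Let `x` be the regular element with `R/(x)` self-injective. Since `dim R = 1`, a power `q = x^(n+1)`
lies in `I`, and `I⁻¹ = q⁻¹ ((q) : I)`, so reflexivity is the double annihilator property
`(q) : ((q) : I) = I`. It holds because `R/(q)` is again self-injective (Baer's criterion, by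
induction along `0 → R/(x) → R/(x^(k+1)) → R/(x^k) → 0`) and has a nonzero socle element `w`: if
`r ∉ I`, then `(I : r) ⊆ 𝔪` kills `w`, and injectivity yields `c` with `c I ⊆ (q)` and `r c ≡ w`,
contradicting `r ((q) : I) ⊆ (q)`.
-/

theorem eq_maximalIdeal_of_mem_nonZeroDivisors {R : Type*} [CommRing R] [IsLocalRing R]
    (hdim : ringKrullDim R = 1) {p : Ideal R} [p.IsPrime] {z : R} (hz : z ∈ nonZeroDivisors R)
    (hzp : z ∈ p) : p = maximalIdeal R := by
  by_contra hne
  have hlt : p < maximalIdeal R := lt_of_le_of_ne (le_maximalIdeal Ideal.IsPrime.ne_top') hne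
  have hm : (maximalIdeal R).height = 1 := by
    exact_mod_cast (maximalIdeal_height_eq_ringKrullDim (R := R)).trans hdim
  have : (maximalIdeal R).FiniteHeight := ⟨Or.inr (by simp [hm])⟩
  have hp : 1 ≤ p.height := (Ideal.one_le_height_span_singleton_of_mem_nonZeroDivisors hz).trans
    (Ideal.height_mono ((Ideal.span_singleton_le_iff_mem p).mpr hzp))
  exact (hp.trans_lt (hm ▸ Ideal.height_strict_mono_of_isPrime_of_isPrime hlt)).false

theorem exists_maximalIdeal_pow_le_span_singleton {R : Type*} [CommRing R] [IsNoetherianRing R]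
    [IsLocalRing R] (hdim : ringKrullDim R = 1) {z : R} (hz : z ∈ nonZeroDivisors R) :
    ∃ k, maximalIdeal R ^ k ≤ Ideal.span {z} := by
  refine Ideal.exists_pow_le_of_le_radical_of_fg ?_ (IsNoetherian.noetherian _)
  rw [Ideal.radical_eq_sInf]
  refine le_sInf fun p ⟨hzp, hp⟩ => ?_
  rw [eq_maximalIdeal_of_mem_nonZeroDivisors hdim hz ((Ideal.span_singleton_le_iff_mem p).mp hzp)]

theorem Ideal.exists_notMem_forall_mul_mem_of_pow_le {R : Type*} [CommRing R] {M N : Ideal R}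
    (hN : N ≠ ⊤) : ∀ {k : ℕ}, M ^ k ≤ N → ∃ w ∉ N, ∀ u ∈ M, w * u ∈ N
  | 0, h => absurd (top_le_iff.mp (by simpa using h)) hN
  | k + 1, h => by
    by_cases hk : M ^ k ≤ N
    · exact exists_notMem_forall_mul_mem_of_pow_le hN hk
    · obtain ⟨w, hwM, hwN⟩ := SetLike.not_le_iff_exists.mp hk
      exact ⟨w, hwN, fun u hu => h (pow_succ M k ▸ Ideal.mul_mem_mul hwM hu)⟩

/-- Extend `B ⧸ (I : r) → B, 1 ↦ w` along the embedding `B ⧸ (I : r) → B ⧸ I, 1 ↦ r`. -/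
theorem exists_mem_annihilator_mul_eq {B : Type*} [CommRing B] [Module.Injective B B]
    {I : Ideal B} {r w : B} (h : ∀ k, k * r ∈ I → k * w = 0) :
    ∃ c ∈ I.annihilator, r * c = w := by
  set φ : B →ₗ[B] B ⧸ I := I.mkQ ∘ₗ LinearMap.toSpanSingleton B B r
  have hker : LinearMap.ker φ ≤ LinearMap.ker (LinearMap.toSpanSingleton B B w) := fun k hk => by
    have : k * r ∈ I := by
      simpa [φ, ← map_mul, Ideal.Quotient.eq_zero_iff_mem] using hk
    simpa using h k this
  obtain ⟨H, hH⟩ := Module.Injective.out ((LinearMap.ker φ).liftQ φ le_rfl)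
    (by rw [← LinearMap.ker_eq_bot]; exact Submodule.ker_liftQ_eq_bot' _ _ rfl)
    ((LinearMap.ker φ).liftQ _ hker)
  refine ⟨H (I.mkQ 1), Submodule.mem_annihilator.mpr fun i hi => ?_, ?_⟩
  · rw [smul_eq_mul, mul_comm, ← smul_eq_mul, ← map_smul, ← map_smul, smul_eq_mul, mul_one,
      Submodule.mkQ_apply, (Submodule.Quotient.mk_eq_zero _).mpr hi, map_zero]
  · have := hH ((LinearMap.ker φ).mkQ 1)
    simp only [Submodule.mkQ_apply, Submodule.liftQ_apply, φ, LinearMap.comp_apply,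
      LinearMap.toSpanSingleton_apply, one_smul] at this
    rw [← this, ← smul_eq_mul, ← map_smul, ← map_smul, smul_eq_mul, mul_one, Submodule.mkQ_apply]

theorem Ideal.colon_colon_le_of_injective {R : Type*} [CommRing R] [IsLocalRing R] {I : Ideal R}
    {q w : R} (hqI : q ∈ I) [Module.Injective (R ⧸ Ideal.span {q}) (R ⧸ Ideal.span {q})]
    (hw : w ∉ Ideal.span {q}) (hwm : ∀ u ∈ maximalIdeal R, w * u ∈ Ideal.span {q}) :
    (Ideal.span {q}).colon ((Ideal.span {q}).colon I) ≤ I := by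
  intro r hr
  by_contra hrI
  set π := Ideal.Quotient.mk (Ideal.span {q})
  have hqI' : Ideal.span {q} ≤ I := (Ideal.span_singleton_le_iff_mem I).mpr hqI
  obtain ⟨c', hc', hrc⟩ := exists_mem_annihilator_mul_eq (I := I.map π) (r := π r) (w := π w) <| by
    intro k' hk'
    obtain ⟨k, rfl⟩ := Ideal.Quotient.mk_surjective k'
    rw [← map_mul, Ideal.mem_quotient_iff_mem hqI'] at hk'
    have hk : k ∈ maximalIdeal R := fun hku => hrI <| by
      simpa [← mul_assoc] using I.mul_mem_left (hku.unit⁻¹ : Rˣ) hk'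
    rw [← map_mul, Ideal.Quotient.eq_zero_iff_mem, mul_comm]
    exact hwm k hk
  obtain ⟨c, rfl⟩ := Ideal.Quotient.mk_surjective c'
  have hcI : c ∈ (Ideal.span {q}).colon I := Submodule.mem_colon.mpr fun i hi => by
    have := Submodule.mem_annihilator.mp hc' (π i) (Ideal.mem_map_of_mem π hi)
    rw [smul_eq_mul, ← map_mul, Ideal.Quotient.eq_zero_iff_mem] at this
    rwa [smul_eq_mul]
  have hrc' := Submodule.mem_colon.mp hr c hcI
  rw [smul_eq_mul, ← Ideal.Quotient.eq_zero_iff_mem, map_mul, hrc,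
    Ideal.Quotient.eq_zero_iff_mem] at hrc'
  exact hw hrc'

section SpanQuotBaer

variable {R : Type*} [CommRing R]

/-- Baer's criterion for `R ⧸ (q)` over itself, read on ideals of `R`: an ideal of `R ⧸ (q)` is the
image of an ideal `J` of `R`, and a linear map on it is a map on `J` that kills `J ∩ (q)`. -/
def SpanQuotBaer (q : R) : Prop :=
  ∀ (J : Ideal R) (f : J →ₗ[R] R ⧸ Ideal.span {q}), (∀ j : J, (j : R) ∈ Ideal.span {q} → f j = 0) →
    ∃ c : R, ∀ j : J, f j = Ideal.Quotient.mk _ (c * j)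

theorem spanQuotBaer_of_baer {q : R}
    (h : Module.Baer (R ⧸ Ideal.span {q}) (R ⧸ Ideal.span {q})) : SpanQuotBaer q := by
  intro J f hf
  set π := Ideal.Quotient.mk (Ideal.span {q})
  let πJ : J →ₗ[R] J.map π :=
    { toFun := fun j => ⟨π j, Ideal.mem_map_of_mem π j.2⟩
      map_add' := fun _ _ => by ext; simp
      map_smul' := fun _ _ => by ext; simp [π, Algebra.smul_def] }
  have hπJ : Function.Surjective πJ := by
    rintro ⟨y, hy⟩
    obtain ⟨j, hj, rfl⟩ := (Ideal.mem_map_iff_of_surjective π Ideal.Quotient.mk_surjective).mp hy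
    exact ⟨⟨j, hj⟩, rfl⟩
  have hker : LinearMap.ker πJ ≤ LinearMap.ker f := fun j hj => by
    apply hf
    rw [← Ideal.Quotient.eq_zero_iff_mem]
    exact congrArg Subtype.val hj
  let G : J.map π →ₗ[R ⧸ Ideal.span {q}] R ⧸ Ideal.span {q} :=
    (((LinearMap.ker πJ).liftQ f hker) ∘ₗ (πJ.quotKerEquivOfSurjective hπJ).symm.toLinearMap)
      |>.extendScalarsOfSurjective Ideal.Quotient.mk_surjective
  obtain ⟨G', hG'⟩ := h _ G
  obtain ⟨c, hc⟩ := Ideal.Quotient.mk_surjective (G' 1)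
  refine ⟨c, fun j => ?_⟩
  have hGj : G ⟨π j, Ideal.mem_map_of_mem π j.2⟩ = f j := by
    show G (πJ j) = f j
    simp [G]
  rw [← hGj, ← hG' (π j) (Ideal.mem_map_of_mem π j.2), map_mul, hc, mul_comm, ← smul_eq_mul,
    ← map_smul, smul_eq_mul, mul_one]

theorem SpanQuotBaer.baer {q : R} (h : SpanQuotBaer q) :
    Module.Baer (R ⧸ Ideal.span {q}) (R ⧸ Ideal.span {q}) := by
  intro I g
  set π := Ideal.Quotient.mk (Ideal.span {q})
  let f : I.comap π →ₗ[R] R ⧸ Ideal.span {q} :=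
    { toFun := fun j => g ⟨π j, j.2⟩
      map_add' := fun a b => by rw [← map_add]; congr 1
      map_smul' := fun r a => by
        rw [RingHom.id_apply, Algebra.smul_def, ← smul_eq_mul, ← map_smul]; congr 1 }
  obtain ⟨c, hc⟩ := h _ f fun j hj => by
    simp only [f, LinearMap.coe_mk, AddHom.coe_mk]
    rw [← map_zero g]; congr 1; ext; exact Ideal.Quotient.eq_zero_iff_mem.mpr hj
  refine ⟨LinearMap.toSpanSingleton _ _ (π c), fun x hx => ?_⟩
  obtain ⟨j, rfl⟩ := Ideal.Quotient.mk_surjective x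
  rw [LinearMap.toSpanSingleton_apply, smul_eq_mul, ← map_mul, mul_comm]
  exact (hc ⟨j, hx⟩).symm

theorem spanQuotBaer_iff_injective {q : R} :
    SpanQuotBaer q ↔ Module.Injective (R ⧸ Ideal.span {q}) (R ⧸ Ideal.span {q}) :=
  ⟨fun h => h.baer.injective, fun h => spanQuotBaer_of_baer (Module.Baer.of_injective h)⟩

def mulQuot (u : R) {p q : R} (h : u * p = q) : R ⧸ Ideal.span {p} →ₗ[R] R ⧸ Ideal.span {q} :=
  Submodule.mapQ _ _ (LinearMap.mulLeft R u) <| (Submodule.span_singleton_le_iff_mem _ _).mpr <| by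
    simp [← h]

section mulQuot

variable {u p q : R} (h : u * p = q)

@[simp]
theorem mulQuot_mk (t : R) : mulQuot u h (Ideal.Quotient.mk _ t) = Ideal.Quotient.mk _ (u * t) :=
  rfl

theorem mulQuot_injective (hu : u ∈ nonZeroDivisors R) : Function.Injective (mulQuot u h) := by
  rw [← LinearMap.ker_eq_bot, LinearMap.ker_eq_bot']
  intro y hy
  obtain ⟨t, rfl⟩ := Ideal.Quotient.mk_surjective y
  rw [mulQuot_mk, Ideal.Quotient.eq_zero_iff_mem, ← h, Ideal.mem_span_singleton] at hy
  rw [Ideal.Quotient.eq_zero_iff_mem, Ideal.mem_span_singleton]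
  exact (isRegular_iff_mem_nonZeroDivisors.mpr hu).left.dvd_cancel_left.mp hy

theorem mem_range_mulQuot (hp : p ∈ nonZeroDivisors R) {y : R ⧸ Ideal.span {q}} (hy : p • y = 0) :
    y ∈ LinearMap.range (mulQuot u h) := by
  obtain ⟨t, rfl⟩ := Ideal.Quotient.mk_surjective y
  rw [Algebra.smul_def, Ideal.Quotient.algebraMap_eq, ← map_mul, Ideal.Quotient.eq_zero_iff_mem,
    ← h, Ideal.mem_span_singleton, mul_comm u] at hy
  obtain ⟨s, rfl⟩ := (isRegular_iff_mem_nonZeroDivisors.mpr hp).left.dvd_cancel_left.mp hy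
  exact ⟨Ideal.Quotient.mk _ s, rfl⟩

theorem exists_mulQuot_comp_eq (hu : u ∈ nonZeroDivisors R) (hp : p ∈ nonZeroDivisors R)
    {M : Type*} [AddCommGroup M] [Module R M] (g : M →ₗ[R] R ⧸ Ideal.span {q})
    (hg : ∀ m, p • g m = 0) : ∃ g' : M →ₗ[R] R ⧸ Ideal.span {p}, ∀ m, mulQuot u h (g' m) = g m := by
  let e := LinearEquiv.ofInjective _ (mulQuot_injective h hu)
  refine ⟨e.symm ∘ₗ g.codRestrict _ fun m => mem_range_mulQuot h hp (hg m), fun m => ?_⟩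
  exact congrArg Subtype.val (e.apply_symm_apply ⟨g m, mem_range_mulQuot h hp (hg m)⟩)

end mulQuot

/-- A map `f` on `J` to `R ⧸ (ab)` restricts, on `a (J : a)`, to a map into `a R ⧸ (ab) ≅ R ⧸ (b)`;
correcting `f` by the multiplier obtained there leaves a map killed by `a`, that is, a map into
`b R ⧸ (ab) ≅ R ⧸ (a)`. -/
theorem SpanQuotBaer.mul {a b : R} (ha : a ∈ nonZeroDivisors R) (hb : b ∈ nonZeroDivisors R)
    (hA : SpanQuotBaer a) (hB : SpanQuotBaer b) : SpanQuotBaer (a * b) := by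
  intro J f hf
  let J' := Submodule.comap (LinearMap.mulLeft R a) J
  let emb : J' →ₗ[R] J := (LinearMap.mulLeft R a).restrict fun _ hc => hc
  have hemb : ∀ c : J', (emb c : R) = a * c := fun _ => rfl
  obtain ⟨f', hf'⟩ := exists_mulQuot_comp_eq (rfl : a * b = a * b) ha hb (f ∘ₗ emb) fun c => by
    rw [LinearMap.comp_apply, ← map_smul]
    exact hf _ (Ideal.mem_span_singleton.mpr ⟨c, by simp [hemb]; ring⟩)
  obtain ⟨c₀, hc₀⟩ := hB J' f' fun c hc => mulQuot_injective rfl ha <| by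
    rw [hf', map_zero, LinearMap.comp_apply]
    obtain ⟨t, ht⟩ := Ideal.mem_span_singleton.mp hc
    exact hf _ (Ideal.mem_span_singleton.mpr ⟨t, by rw [hemb, ht, mul_assoc]⟩)
  let g : J →ₗ[R] R ⧸ Ideal.span {a * b} := f - c₀ • (Ideal.span {a * b}).mkQ ∘ₗ J.subtype
  have hg : ∀ j, g j = f j - Ideal.Quotient.mk _ (c₀ * j) := fun j => by
    simp [g, Algebra.smul_def, Ideal.Quotient.mk_eq_mk]
  have hg_emb : ∀ c : J', g (emb c) = 0 := fun c => by
    rw [hg, hemb, ← LinearMap.comp_apply f emb, ← hf' c, hc₀, mulQuot_mk, mul_left_comm, sub_self]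
  have hg_smul : ∀ j, a • g j = 0 := fun j => by
    rw [← map_smul, ← hg_emb ⟨j, J.mul_mem_left a j.2⟩]
    rfl
  obtain ⟨g', hg'⟩ := exists_mulQuot_comp_eq (mul_comm b a) hb ha g hg_smul
  obtain ⟨c₁, hc₁⟩ := hA J g' fun j hj => mulQuot_injective (mul_comm b a) hb <| by
    obtain ⟨t, ht⟩ := Ideal.mem_span_singleton.mp hj
    rw [hg', map_zero, ← hg_emb ⟨t, show a * t ∈ J from ht ▸ j.2⟩]
    exact congrArg g (Subtype.ext ht)
  refine ⟨b * c₁ + c₀, fun j => ?_⟩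
  rw [← sub_add_cancel (f j) (Ideal.Quotient.mk _ (c₀ * j)), ← hg, ← hg', hc₁, mulQuot_mk,
    ← map_add]
  ring_nf

theorem SpanQuotBaer.pow_succ {x : R} (hx : x ∈ nonZeroDivisors R) (h : SpanQuotBaer x) :
    ∀ n : ℕ, SpanQuotBaer (x ^ (n + 1))
  | 0 => by rwa [zero_add, pow_one]
  | n + 1 => by
    rw [_root_.pow_succ]
    exact (SpanQuotBaer.pow_succ hx h n).mul (pow_mem hx _) hx h

end SpanQuotBaer

theorem injective_quotient_span_pow_succ {R : Type*} [CommRing R] {x : R}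
    (hx : x ∈ nonZeroDivisors R) [Module.Injective (R ⧸ Ideal.span {x}) (R ⧸ Ideal.span {x})]
    (n : ℕ) : Module.Injective (R ⧸ Ideal.span {x ^ (n + 1)}) (R ⧸ Ideal.span {x ^ (n + 1)}) :=
  spanQuotBaer_iff_injective.mp <| (spanQuotBaer_iff_injective.mpr ‹_›).pow_succ hx n

section FractionRing

variable {R : Type} [CommRing R]

def idealInverse (I : Ideal R) : Set (FractionRing R) :=
  {α | ∀ x ∈ I, α * algebraMap R (FractionRing R) x ∈ Set.range (algebraMap R (FractionRing R))}

theorem multEnd_idealImage_subset (I : Ideal R) :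
    multEnd (idealImage R I) ⊆ multEnd (idealInverse I) := by
  intro α hα β hβ i hi
  obtain ⟨j, hj, hje⟩ := hα _ ⟨i, hi, rfl⟩
  rw [mul_right_comm, ← hje, mul_comm]
  exact hβ j hj

theorem mk'_mem_idealInverse {I : Ideal R} {a q : R} (hq : q ∈ nonZeroDivisors R)
    (ha : ∀ i ∈ I, a * i ∈ Ideal.span {q}) :
    IsLocalization.mk' (FractionRing R) a ⟨q, hq⟩ ∈ idealInverse I := fun i hi => by
  obtain ⟨t, ht⟩ := Ideal.mem_span_singleton.mp (ha i hi)
  refine ⟨t, ?_⟩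
  rw [mul_comm, IsLocalization.mul_mk'_eq_mk'_of_mul, mul_comm, ht]
  exact (IsLocalization.mk'_mul_cancel_left t _).symm

theorem mul_mem_span_of_mk'_mul_mem_range {a q r : R} (hq : q ∈ nonZeroDivisors R)
    (h : IsLocalization.mk' (FractionRing R) a ⟨q, hq⟩ * algebraMap R (FractionRing R) r ∈
      Set.range (algebraMap R (FractionRing R))) : a * r ∈ Ideal.span {q} := by
  obtain ⟨s, hs⟩ := h
  rw [mul_comm, IsLocalization.mul_mk'_eq_mk'_of_mul, eq_comm, IsLocalization.mk'_eq_iff_eq_mul,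
    ← map_mul, (IsFractionRing.injective R (FractionRing R)).eq_iff, mul_comm r] at hs
  exact Ideal.mem_span_singleton.mpr ⟨s, hs.trans (mul_comm _ _)⟩

theorem IsGorensteinLocalOfDimOne.mem_of_forall_mul_mem_range (hR : IsGorensteinLocalOfDimOne R)
    {I : Ideal R} (hreg : ∃ y ∈ I, y ∈ nonZeroDivisors R) {r : R}
    (hr : ∀ β ∈ idealInverse I, β * algebraMap R (FractionRing R) r ∈
      Set.range (algebraMap R (FractionRing R))) : r ∈ I := by
  obtain ⟨_, _, hdim, x, hxm, hx, _⟩ := hR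
  obtain ⟨y, hyI, hy⟩ := hreg
  obtain ⟨k, hk⟩ := exists_maximalIdeal_pow_le_span_singleton hdim hy
  have hqI : x ^ (k + 1) ∈ I := pow_succ x k ▸ I.mul_mem_right _
    ((Ideal.span_singleton_le_iff_mem I).mpr hyI (hk (Ideal.pow_mem_pow hxm k)))
  have hq : x ^ (k + 1) ∈ nonZeroDivisors R := pow_mem hx _
  have := injective_quotient_span_pow_succ hx k
  obtain ⟨l, hl⟩ := exists_maximalIdeal_pow_le_span_singleton hdim hq
  have hqm : Ideal.span {x ^ (k + 1)} ≠ ⊤ := ne_top_of_le_ne_top (maximalIdeal.isMaximal R).ne_top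
    ((Ideal.span_singleton_le_iff_mem _).mpr (Ideal.pow_mem_of_mem _ hxm _ k.succ_pos))
  obtain ⟨w, hw, hwm⟩ := Ideal.exists_notMem_forall_mul_mem_of_pow_le hqm hl
  refine Ideal.colon_colon_le_of_injective hqI hw hwm (Submodule.mem_colon.mpr fun a ha => ?_)
  rw [smul_eq_mul, mul_comm]
  refine mul_mem_span_of_mk'_mul_mem_range hq (hr _ (mk'_mem_idealInverse hq fun i hi => ?_))
  simpa [mul_comm] using Submodule.mem_colon.mp ha i hi

end FractionRing

theorem stmt_9 (R : Type) [CommRing R] (hGor : IsGorensteinLocalOfDimOne R)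
    (I : Ideal R) (hreg : ∃ x ∈ I, x ∈ nonZeroDivisors R) :
    multEnd (idealImage R I) =
      multEnd {α : FractionRing R | ∀ x ∈ I,
        α * algebraMap R (FractionRing R) x ∈ Set.range (algebraMap R (FractionRing R))} := by
  refine (multEnd_idealImage_subset I).antisymm fun α hα => ?_
  have hαI : α ∈ idealInverse I := by
    simpa using hα 1 fun x _ => by simp
  rintro _ ⟨i, hi, rfl⟩
  obtain ⟨r, hr⟩ := hαI i hi
  refine ⟨r, hGor.mem_of_forall_mul_mem_range hreg fun β hβ => ?_, hr⟩
  rw [hr, mul_left_comm, ← mul_assoc]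
  exact hα β hβ i hi
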